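/- For every integer m ≥ 0, the alternating multiple zeta value ζ(1̄, {1}_m) = Σ_{k_0 > k_1 > ⋯ > k_m ≥ 1} (-1)^{k_0} / (k_0 k_1 ⋯ k_m) equals (-1)^{m+1} (ln 2)^{m+1} / (m+1)!. -/

import Mathlib

/-!
For `|x| < 1` the power series `∑ₙ mhn (n - 1) m / n * xⁿ` equals
`(-log (1 - x)) ^ (m + 1) / (m + 1)!`: multiplying it by `-log (1 - x) = ∑ₙ xⁿ / n` raises `m`
by one, because by partial fractions the Cauchy product coefficients reduce to the convolution
identity `∑_{k + l = N} mhn k m / (l + 1) = (m + 1) * mhn (N + 1) (m + 1)`.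
At `x = -1` the series converges by the alternating series test: `mhn n m ≤ (1 + log n) ^ m`
gives `mhn (n - 1) m / n → 0`, and these terms eventually decrease because
`mhn n (m + 1) - mhn n m → ∞` (each difference is a harmonic-weighted sum of the previous one).
Abel's theorem then identifies the sum with the limit of the generating function as `x → -1⁺`.
-/

open Filter

/-- Multiple harmonic number `ζ_n({1}_m)`. -/
noncomputable def mhn : ℕ → ℕ → ℝ
  | _, 0 => 1
  | n, m + 1 => ∑ j ∈ Finset.Icc 1 n, (1 / (j : ℝ)) * mhn (j - 1) m

open Finset Topology Real

theorem mhn_succ_eq_sum_range (n m : ℕ) : mhn n (m + 1) = ∑ i ∈ range n, mhn i m / (i + 1) := by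
  have h := sum_Ico_add' (fun j : ℕ => 1 / (j : ℝ) * mhn (j - 1) m) 0 n 1
  rw [zero_add, Ico_add_one_right_eq_Icc, ← range_eq_Ico] at h
  rw [mhn, ← h]
  simp [div_eq_inv_mul]

@[simp]
theorem mhn_zero (n : ℕ) : mhn n 0 = 1 := rfl

theorem mhn_zero_succ (m : ℕ) : mhn 0 (m + 1) = 0 := by
  simp [mhn_succ_eq_sum_range]

theorem mhn_succ_succ (n m : ℕ) : mhn (n + 1) (m + 1) = mhn n (m + 1) + mhn n m / (n + 1) := by
  simp only [mhn_succ_eq_sum_range, sum_range_succ]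

theorem mhn_one (n : ℕ) : mhn n 1 = harmonic n := by
  rw [mhn_succ_eq_sum_range]
  simp [harmonic, mhn]

theorem sum_antidiagonal_mhn_div_fst_succ (N m : ℕ) :
    ∑ p ∈ antidiagonal N, mhn p.1 m / (p.1 + 1) = mhn (N + 1) (m + 1) := by
  rw [Nat.sum_antidiagonal_eq_sum_range_succ_mk, mhn_succ_eq_sum_range]

theorem sum_antidiagonal_mhn_div_mul (N m : ℕ) :
    ∑ p ∈ antidiagonal N, mhn p.1 m / ((p.1 + 1) * (p.2 + 1)) =
      (mhn (N + 1) (m + 1) + ∑ p ∈ antidiagonal N, mhn p.1 m / (p.2 + 1)) / (N + 2) := by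
  rw [← sum_antidiagonal_mhn_div_fst_succ, ← sum_add_distrib, sum_div]
  refine sum_congr rfl fun p hp => ?_
  have hN : (p.1 : ℝ) + p.2 = N := by exact_mod_cast mem_antidiagonal.mp hp
  rw [← hN]
  field_simp
  ring

theorem sum_antidiagonal_mhn_div_snd_succ (N m : ℕ) :
    ∑ p ∈ antidiagonal N, mhn p.1 m / (p.2 + 1) = (m + 1) * mhn (N + 1) (m + 1) := by
  induction N generalizing m with
  | zero => cases m <;> simp [mhn]
  | succ N ih =>
    cases m with
    | zero =>
      rw [← Nat.sum_antidiagonal_swap, ← sum_antidiagonal_mhn_div_fst_succ]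
      simp [mhn]
    | succ m =>
      have hsplit : ∀ p ∈ antidiagonal N, mhn (p.1 + 1) (m + 1) / ((p.2 : ℝ) + 1) =
          mhn p.1 (m + 1) / (p.2 + 1) + mhn p.1 m / ((p.1 + 1) * (p.2 + 1)) := by
        intro p _
        rw [mhn_succ_succ, add_div, div_div]
      rw [Nat.sum_antidiagonal_succ, mhn_zero_succ, zero_div, zero_add, sum_congr rfl hsplit,
        sum_add_distrib, ih, sum_antidiagonal_mhn_div_mul, ih, mhn_succ_succ (N + 1)]
      push_cast
      field_simp
      ring

theorem sum_antidiagonal_mhn_pred_div (n m : ℕ) :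
    ∑ p ∈ antidiagonal n, mhn (p.1 - 1) m / p.1 * (mhn (p.2 - 1) 0 / p.2) =
      (m + 2) * (mhn (n - 1) (m + 1) / n) := by
  rcases n with _ | _ | N
  · simp
  · simp [Nat.sum_antidiagonal_succ, mhn_zero_succ]
  · have hterm : ∀ p ∈ antidiagonal N,
        mhn (p.1 + 1 - 1) m / ((p.1 + 1 : ℕ) : ℝ) * (mhn (p.2 + 1 - 1) 0 / ((p.2 + 1 : ℕ) : ℝ)) =
          mhn p.1 m / ((p.1 + 1) * (p.2 + 1)) := by
      intro p _
      rw [Nat.add_sub_cancel, Nat.add_sub_cancel, mhn_zero, div_mul_div_comm, mul_one]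
      push_cast
      rfl
    rw [Nat.sum_antidiagonal_succ', Nat.sum_antidiagonal_succ, sum_congr rfl hterm,
      sum_antidiagonal_mhn_div_mul, sum_antidiagonal_mhn_div_snd_succ]
    simp only [add_tsub_cancel_right, Nat.cast_add, Nat.cast_one, zero_tsub, mhn_zero,
      CharP.cast_eq_zero, div_zero, mul_zero, zero_mul, zero_add]
    ring

theorem mhn_nonneg (n m : ℕ) : 0 ≤ mhn n m := by
  induction m generalizing n with
  | zero => simp
  | succ m ih =>
    rw [mhn_succ_eq_sum_range]
    exact sum_nonneg fun i _ => div_nonneg (ih i) (by positivity)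

theorem mhn_mono (m : ℕ) : Monotone (mhn · m) := by
  refine monotone_nat_of_le_succ fun n => ?_
  cases m with
  | zero => simp
  | succ m =>
    rw [mhn_succ_succ]
    exact le_add_of_nonneg_right (div_nonneg (mhn_nonneg n m) (by positivity))

theorem mhn_le_one_add_log_pow (n m : ℕ) : mhn n m ≤ (1 + log n) ^ m := by
  induction m with
  | zero => simp
  | succ m ih =>
    calc mhn n (m + 1) = ∑ i ∈ range n, mhn i m / (i + 1) := mhn_succ_eq_sum_range n m
      _ ≤ ∑ i ∈ range n, mhn n m / (i + 1) := by
        gcongr with i hi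
        exact mhn_mono m (mem_range.mp hi).le
      _ = mhn n m * harmonic n := by
        rw [← mhn_one, mhn_succ_eq_sum_range, mul_sum]
        simp [div_eq_mul_inv]
      _ ≤ (1 + log n) ^ m * (1 + log n) :=
        mul_le_mul ih (harmonic_le_one_add_log n) (mhn_one n ▸ mhn_nonneg n 1)
          (pow_nonneg (add_nonneg zero_le_one (log_natCast_nonneg n)) m)
      _ = (1 + log n) ^ (m + 1) := (pow_succ _ _).symm

theorem tendsto_one_add_log_pow_div_atTop (m : ℕ) :
    Tendsto (fun x : ℝ => (1 + log x) ^ m / x) atTop (𝓝 0) := by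
  have h := (tendsto_pow_log_div_mul_add_atTop (exp (-1)) 0 m (exp_pos _).ne').comp
    (tendsto_id.const_mul_atTop (exp_pos 1))
  refine h.congr' ?_
  filter_upwards [eventually_gt_atTop 0] with x hx
  simp [log_mul (exp_pos 1).ne' hx.ne', ← mul_assoc, ← exp_add]

theorem tendsto_mhn_div_succ (m : ℕ) : Tendsto (fun n : ℕ => mhn n m / (n + 1)) atTop (𝓝 0) := by
  have h := (tendsto_one_add_log_pow_div_atTop m).comp
    (tendsto_atTop_add_const_right _ 1 tendsto_natCast_atTop_atTop)
  refine tendsto_of_tendsto_of_tendsto_of_le_of_le tendsto_const_nhds h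
    (fun n => div_nonneg (mhn_nonneg n m) (by positivity)) fun n => ?_
  have := (mhn_mono m n.le_succ).trans (mhn_le_one_add_log_pow (n + 1) m)
  push_cast at this
  exact div_le_div_of_nonneg_right this (by positivity)

theorem tendsto_sum_range_div_succ_atTop {a : ℕ → ℝ} (ha : Tendsto a atTop atTop) :
    Tendsto (fun n => ∑ i ∈ range n, a i / (i + 1)) atTop atTop := by
  obtain ⟨K, hK⟩ := eventually_atTop.mp (ha.eventually_ge_atTop 1)
  have hsplit : ∀ n, ∑ i ∈ range n, a i / (i + 1) =
      ∑ i ∈ range n, (a i - 1) / (i + 1) + ∑ i ∈ range n, 1 / ((i : ℝ) + 1) := by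
    intro n
    rw [← sum_add_distrib]
    congr! 1 with i
    ring
  simp only [hsplit]
  refine tendsto_atTop_add_left_of_le' _ (∑ i ∈ range K, (a i - 1) / (i + 1)) ?_
    tendsto_sum_range_one_div_nat_succ_atTop
  filter_upwards [eventually_ge_atTop K] with n hn
  refine sum_le_sum_of_subset_of_nonneg (range_mono hn) fun i hi hiK => ?_
  have hi : K ≤ i := by simpa using hiK
  exact div_nonneg (sub_nonneg.mpr (hK i hi)) (by positivity)

theorem tendsto_mhn_succ_sub_mhn_atTop (m : ℕ) :
    Tendsto (fun n => mhn n (m + 1) - mhn n m) atTop atTop := by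
  induction m with
  | zero =>
    simp only [mhn_succ_eq_sum_range, mhn_zero]
    exact tendsto_atTop_add_const_right _ _ tendsto_sum_range_one_div_nat_succ_atTop
  | succ m ih =>
    have hdiff : ∀ n, mhn n (m + 2) - mhn n (m + 1) =
        ∑ i ∈ range n, (mhn i (m + 1) - mhn i m) / (i + 1) := fun n => by
      rw [mhn_succ_eq_sum_range n (m + 1), mhn_succ_eq_sum_range n m, ← sum_sub_distrib]
      simp only [sub_div]
    simpa only [hdiff] using tendsto_sum_range_div_succ_atTop ih

theorem eventually_mhn_succ_div_le (m : ℕ) :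
    ∀ᶠ n : ℕ in atTop, mhn (n + 1) m / ((n + 1 : ℕ) + 1) ≤ mhn n m / (n + 1) := by
  push_cast
  cases m with
  | zero =>
    refine Eventually.of_forall fun n => ?_
    simp only [mhn_zero]
    gcongr
    linarith
  | succ m =>
    filter_upwards [(tendsto_mhn_succ_sub_mhn_atTop m).eventually_ge_atTop 0] with n hn
    rw [mhn_succ_succ, div_le_div_iff₀ (by positivity) (by positivity), add_mul,
      div_mul_cancel₀ _ (by positivity)]
    nlinarith

theorem exists_tendsto_alternating_series_of_eventually_antitone {f : ℕ → ℝ}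
    (hf : ∀ᶠ n in atTop, f (n + 1) ≤ f n) (h0 : Tendsto f atTop (𝓝 0)) :
    ∃ l, Tendsto (fun n => ∑ i ∈ range n, (-1) ^ i * f i) atTop (𝓝 l) := by
  obtain ⟨K, hK⟩ := eventually_atTop.mp hf
  have hanti : Antitone fun i => f (i + K) := antitone_nat_of_succ_le fun i => by
    rw [Nat.add_right_comm]
    exact hK _ (Nat.le_add_left K i)
  obtain ⟨l, hl⟩ :=
    hanti.tendsto_alternating_series_of_tendsto_zero (h0.comp (tendsto_add_atTop_nat K))
  refine ⟨∑ i ∈ range K, (-1) ^ i * f i + (-1) ^ K * l, (tendsto_add_atTop_iff_nat K).mp ?_⟩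
  refine ((hl.const_mul _).const_add _).congr fun n => ?_
  rw [add_comm n K, sum_range_add, mul_sum]
  congr! 2 with i
  rw [pow_add, add_comm i K]
  ring

theorem summable_norm_pow_mul_mhn_pred_div (m : ℕ) {x : ℝ} (hx : |x| < 1) :
    Summable fun n : ℕ => ‖x ^ n * (mhn (n - 1) m / n)‖ := by
  have h0 : Tendsto (fun n : ℕ => mhn (n - 1) m / n) atTop (𝓝 0) :=
    (tendsto_add_atTop_iff_nat 1).mp (by simpa using tendsto_mhn_div_succ m)
  refine (summable_geometric_of_lt_one (abs_nonneg x) hx).of_norm_bounded_eventually_nat ?_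
  filter_upwards [h0.eventually (eventually_le_nhds one_pos)] with n hn
  rw [norm_norm, norm_mul, norm_pow, Real.norm_eq_abs,
    Real.norm_of_nonneg (div_nonneg (mhn_nonneg _ _) n.cast_nonneg)]
  exact mul_le_of_le_one_right (by positivity) hn

-- The `n = 0` term vanishes because `(0 : ℝ)⁻¹ = 0`.
open scoped Nat in
theorem hasSum_pow_mul_mhn_pred_div (m : ℕ) {x : ℝ} (hx : |x| < 1) :
    HasSum (fun n : ℕ => x ^ n * (mhn (n - 1) m / n)) ((-log (1 - x)) ^ (m + 1) / (m + 1)!) := by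
  set L := -log (1 - x)
  have hlog : HasSum (fun n : ℕ => x ^ n * (mhn (n - 1) 0 / n)) L := by
    rw [← hasSum_nat_add_iff' 1]
    simpa [div_eq_mul_inv] using hasSum_pow_div_log_of_abs_lt_one hx
  induction m with
  | zero => simpa using hlog
  | succ m ih =>
    have hf := summable_norm_pow_mul_mhn_pred_div m hx
    have hg := summable_norm_pow_mul_mhn_pred_div 0 hx
    have hcauchy := (summable_norm_sum_mul_antidiagonal_of_summable_norm hf hg).of_norm.hasSum
    rw [← tsum_mul_tsum_eq_tsum_sum_antidiagonal_of_summable_norm hf hg, ih.tsum_eq,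
      hlog.tsum_eq] at hcauchy
    have hterm : ∀ n, ∑ p ∈ antidiagonal n,
        x ^ p.1 * (mhn (p.1 - 1) m / p.1) * (x ^ p.2 * (mhn (p.2 - 1) 0 / p.2)) =
          (m + 2) * (x ^ n * (mhn (n - 1) (m + 1) / n)) := fun n =>
      calc _ = ∑ p ∈ antidiagonal n, x ^ n * (mhn (p.1 - 1) m / p.1 * (mhn (p.2 - 1) 0 / p.2)) :=
            sum_congr rfl fun p hp => by rw [← mem_antidiagonal.mp hp, pow_add]; ring
        _ = _ := by rw [← mul_sum, sum_antidiagonal_mhn_pred_div]; ring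
    have hval : L ^ (m + 1) / (m + 1)! * L = (m + 2) * (L ^ (m + 2) / (m + 2)!) := by
      rw [Nat.factorial_succ (m + 1)]
      push_cast
      field_simp
      ring
    simp only [hterm, hval] at hcauchy
    exact (hasSum_mul_left_iff (by positivity)).mp hcauchy

open scoped Nat in
theorem hasSum_neg_one_pow_div_mul_mhn_mul_pow (m : ℕ) {x : ℝ} (hx : |x| < 1) :
    HasSum (fun n : ℕ => (-1) ^ n / n * mhn (n - 1) m * x ^ n)
      ((-log (1 + x)) ^ (m + 1) / (m + 1)!) := by
  have h := hasSum_pow_mul_mhn_pred_div m (x := -x) (by rwa [abs_neg])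
  rw [sub_neg_eq_add] at h
  convert h using 2 with n
  rw [neg_pow]
  ring

theorem stmt_5 (m : ℕ) :
    Tendsto (fun N : ℕ => ∑ n ∈ Finset.Icc 1 N, (-1 : ℝ) ^ n / (n : ℝ) * mhn (n - 1) m)
      atTop
      (nhds ((-1 : ℝ) ^ (m + 1) * (Real.log 2) ^ (m + 1) / (Nat.factorial (m + 1) : ℝ))) := by
  set a : ℕ → ℝ := fun n => (-1) ^ n / n * mhn (n - 1) m
  obtain ⟨l, hl⟩ := exists_tendsto_alternating_series_of_eventually_antitone
    (eventually_mhn_succ_div_le m) (tendsto_mhn_div_succ m)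
  have hS : Tendsto (fun N => ∑ n ∈ range (N + 1), a n) atTop (𝓝 (-l)) :=
    hl.neg.congr fun N => by
      rw [sum_range_succ', ← sum_neg_distrib]
      simp only [a, Nat.add_sub_cancel, Nat.cast_zero, div_zero, zero_mul, add_zero]
      exact sum_congr rfl fun i _ => by push_cast; ring
  have hgen : (fun x => ∑' n, a n * x ^ n) =ᶠ[𝓝[<] 1]
      fun x => (-log (1 + x)) ^ (m + 1) / (m + 1).factorial := by
    filter_upwards [Ioo_mem_nhdsLT (show (-1 : ℝ) < 1 by norm_num)] with x hx
    exact (hasSum_neg_one_pow_div_mul_mhn_mul_pow m (abs_lt.mpr hx)).tsum_eq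
  have hcont : ContinuousAt (fun x : ℝ => (-log (1 + x)) ^ (m + 1) / (m + 1).factorial) 1 :=
    (((continuousAt_const.add continuousAt_id).log (by norm_num)).neg.pow _).div_const _
  have hlim : -l = (-log 2) ^ (m + 1) / (m + 1).factorial := by
    have habel := tendsto_tsum_powerSeries_nhdsWithin_lt ((tendsto_add_atTop_iff_nat 1).mp hS)
    refine tendsto_nhds_unique (habel.congr' hgen) ?_
    simpa [one_add_one_eq_two] using hcont.tendsto.mono_left nhdsWithin_le_nhds
  rw [← neg_pow, ← hlim]
  refine hS.congr fun N => ?_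
  rw [Nat.range_succ_eq_Icc_zero, ← insert_Icc_add_one_left_eq_Icc N.zero_le, sum_insert (by simp)]
  simp [a]
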